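/- arXiv:1412.5320 — 2 statements merged into one kernel-verified Lean document; each statement's English description precedes it below -/
import Mathlib

section
/- Let F₁, F₃ be holomorphic functions of ξ₁ and F₂, F₄ holomorphic functions of ξ₂, and define Φ(ζ) = F₁(ξ₁)e₁ + F₂(ξ₂)e₂ + F₃(ξ₁)e₃ + F₄(ξ₂)e₄ for ζ = x + y i₂ + z i₃, ξ₁ = x + ya₁ + zb₁, ξ₂ = x + ya₂ + zb₂. Then Φ satisfies the Cauchy–Riemann-type conditions ∂Φ/∂y = i₂·∂Φ/∂x and ∂Φ/∂z = i₃·∂Φ/∂x (i.e. Φ is right-G-monogenic). -/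
open Quaternion

/-- The quaternionic unit `I` in `ℍ(ℂ)`. -/
noncomputable def Iq : ℍ[ℂ] := ⟨0,1,0,0⟩
/-- The quaternionic unit `J` in `ℍ(ℂ)`. -/
noncomputable def Jq : ℍ[ℂ] := ⟨0,0,1,0⟩
/-- The quaternionic unit `K` in `ℍ(ℂ)`. -/
noncomputable def Kq : ℍ[ℂ] := ⟨0,0,0,1⟩
/-- `e₁ = (1 + iI)/2`. -/
noncomputable def e1 : ℍ[ℂ] := (2:ℂ)⁻¹ • (1 + Complex.I • Iq)
/-- `e₂ = (1 - iI)/2`. -/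
noncomputable def e2 : ℍ[ℂ] := (2:ℂ)⁻¹ • (1 - Complex.I • Iq)
/-- `e₃ = (iJ - K)/2`. -/
noncomputable def e3 : ℍ[ℂ] := (2:ℂ)⁻¹ • (Complex.I • Jq - Kq)
/-- `e₄ = (iJ + K)/2`. -/
noncomputable def e4 : ℍ[ℂ] := (2:ℂ)⁻¹ • (Complex.I • Jq + Kq)
/-- `a e₁ + b e₂`; used for `i₂ = a₁e₁ + a₂e₂` and `i₃ = b₁e₁ + b₂e₂`. -/
noncomputable def sp (a b : ℂ) : ℍ[ℂ] := a • e1 + b • e2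
/-- A norm on `ℍ(ℂ)`, induced from `ℂ⁴` via the coordinate linear equivalence. -/
noncomputable instance : NormedAddCommGroup ℍ[ℂ] :=
  NormedAddCommGroup.induced ℍ[ℂ] (Fin 4 → ℂ)
    (QuaternionAlgebra.linearEquivTuple (-1:ℂ) (0:ℂ) (-1:ℂ)).toLinearMap
    (QuaternionAlgebra.linearEquivTuple (-1:ℂ) (0:ℂ) (-1:ℂ)).injective

noncomputable instance : NormedSpace ℝ ℍ[ℂ] :=
  NormedSpace.induced ℝ ℍ[ℂ] (Fin 4 → ℂ)
    ((QuaternionAlgebra.linearEquivTuple (-1:ℂ) (0:ℂ) (-1:ℂ)).restrictScalars ℝ).toLinearMap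

/-- `ξₖ(t) = x(t) + y(t)aₖ + z(t)bₖ` along a curve `(x,y,z)`. -/
noncomputable def xi (a b : ℂ) (x y z : ℝ → ℝ) (t : ℝ) : ℂ :=
  (x t : ℂ) + (y t : ℂ) * a + (z t : ℂ) * b

/-- `Φ(ζ) = F₁(ξ₁)e₁ + F₂(ξ₂)e₂ + F₃(ξ₁)e₃ + F₄(ξ₂)e₄` as a function of `(x,y,z)`,
where `ξ₁ = x + ya₁ + zb₁` and `ξ₂ = x + ya₂ + zb₂`. -/
noncomputable def Phi (a₁ a₂ b₁ b₂ : ℂ) (F₁ F₂ F₃ F₄ : ℂ → ℂ) (x y z : ℝ) : ℍ[ℂ] :=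
  F₁ ((x:ℂ) + y * a₁ + z * b₁) • e1 + F₂ ((x:ℂ) + y * a₂ + z * b₂) • e2 +
  F₃ ((x:ℂ) + y * a₁ + z * b₁) • e3 + F₄ ((x:ℂ) + y * a₂ + z * b₂) • e4

noncomputable instance : NormedSpace ℂ ℍ[ℂ] :=
  NormedSpace.induced ℂ ℍ[ℂ] (Fin 4 → ℂ)
    (QuaternionAlgebra.linearEquivTuple (-1:ℂ) (0:ℂ) (-1:ℂ)).toLinearMap

lemma comp_deriv (F : ℂ → ℂ) (hF : Differentiable ℂ F) (g : ℝ → ℂ) (g' : ℂ) (t : ℝ)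
    (hg : HasDerivAt g g' t) : HasDerivAt (fun s => F (g s)) (g' * deriv F (g t)) t := by
  have h := ((hF (g t)).hasDerivAt.hasFDerivAt.restrictScalars ℝ).comp_hasDerivAt t hg
  simpa [mul_comm, Function.comp_def] using h

lemma mul_sp (a b c₁ c₂ c₃ c₄ : ℂ) :
    sp a b * (c₁ • e1 + c₂ • e2 + c₃ • e3 + c₄ • e4) =
    (a*c₁) • e1 + (b*c₂) • e2 + (a*c₃) • e3 + (b*c₄) • e4 := by
  simp only [sp, e1, e2, e3, e4]
  have hI : Iq.re = 0 ∧ Iq.imI = 1 ∧ Iq.imJ = 0 ∧ Iq.imK = 0 := ⟨rfl, rfl, rfl, rfl⟩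
  have hJ : Jq.re = 0 ∧ Jq.imI = 0 ∧ Jq.imJ = 1 ∧ Jq.imK = 0 := ⟨rfl, rfl, rfl, rfl⟩
  have hK : Kq.re = 0 ∧ Kq.imI = 0 ∧ Kq.imJ = 0 ∧ Kq.imK = 1 := ⟨rfl, rfl, rfl, rfl⟩
  ext <;> simp [QuaternionAlgebra.re_mul, QuaternionAlgebra.imI_mul,
    QuaternionAlgebra.imJ_mul, QuaternionAlgebra.imK_mul, Quaternion.re_smul, Quaternion.imI_smul,
    Quaternion.imJ_smul, Quaternion.imK_smul, hI, hJ, hK] <;> ring_nf <;>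
    simp [Complex.I_sq] <;> ring

/-- for holomorphic `F₁, F₃` (of `ξ₁`) and `F₂, F₄` (of `ξ₂`), the mapping
`Φ` satisfies the Cauchy–Riemann-type conditions `∂Φ/∂y = i₂ ∂Φ/∂x`, `∂Φ/∂z = i₃ ∂Φ/∂x`. -/
theorem Phi_is_right_G_monogenic (a₁ a₂ b₁ b₂ : ℂ) (F₁ F₂ F₃ F₄ : ℂ → ℂ)
    (hF₁ : Differentiable ℂ F₁) (hF₂ : Differentiable ℂ F₂)
    (hF₃ : Differentiable ℂ F₃) (hF₄ : Differentiable ℂ F₄) :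
    ∀ x y z : ℝ, ∃ d : ℍ[ℂ],
      HasDerivAt (fun s => Phi a₁ a₂ b₁ b₂ F₁ F₂ F₃ F₄ s y z) d x ∧
      HasDerivAt (fun s => Phi a₁ a₂ b₁ b₂ F₁ F₂ F₃ F₄ x s z) (sp a₁ a₂ * d) y ∧
      HasDerivAt (fun s => Phi a₁ a₂ b₁ b₂ F₁ F₂ F₃ F₄ x y s) (sp b₁ b₂ * d) z := by
  
  intro x y z
  set ξ1 : ℂ := (x:ℂ) + y * a₁ + z * b₁ with hx1
  set ξ2 : ℂ := (x:ℂ) + y * a₂ + z * b₂ with hx2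
  refine ⟨deriv F₁ ξ1 • e1 + deriv F₂ ξ2 • e2 + deriv F₃ ξ1 • e3 + deriv F₄ ξ2 • e4, ?_, ?_, ?_⟩
  · have h1 : HasDerivAt (fun s : ℝ => (s:ℂ) + y * a₁ + z * b₁) 1 x := by
      simpa using ((Complex.ofRealCLM.hasDerivAt.add_const ((y:ℂ) * a₁)).add_const ((z:ℂ)*b₁))
    have h2 : HasDerivAt (fun s : ℝ => (s:ℂ) + y * a₂ + z * b₂) 1 x := by
      simpa using ((Complex.ofRealCLM.hasDerivAt.add_const ((y:ℂ) * a₂)).add_const ((z:ℂ)*b₂))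
    have := (((comp_deriv F₁ hF₁ _ 1 x h1).smul_const e1).add
      ((comp_deriv F₂ hF₂ _ 1 x h2).smul_const e2)).add
      ((comp_deriv F₃ hF₃ _ 1 x h1).smul_const e3) |>.add
      ((comp_deriv F₄ hF₄ _ 1 x h2).smul_const e4)
    simpa [Phi, hx1, hx2, Pi.add_def] using this
  · have h1 : HasDerivAt (fun s : ℝ => (x:ℂ) + s * a₁ + z * b₁) a₁ y := by
      simpa using (((Complex.ofRealCLM.hasDerivAt.mul_const a₁).const_add ((x:ℂ))).add_const ((z:ℂ)*b₁))
    have h2 : HasDerivAt (fun s : ℝ => (x:ℂ) + s * a₂ + z * b₂) a₂ y := by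
      simpa using (((Complex.ofRealCLM.hasDerivAt.mul_const a₂).const_add ((x:ℂ))).add_const ((z:ℂ)*b₂))
    have := (((comp_deriv F₁ hF₁ _ a₁ y h1).smul_const e1).add
      ((comp_deriv F₂ hF₂ _ a₂ y h2).smul_const e2)).add
      ((comp_deriv F₃ hF₃ _ a₁ y h1).smul_const e3) |>.add
      ((comp_deriv F₄ hF₄ _ a₂ y h2).smul_const e4)
    rw [mul_sp]
    simpa [Phi, hx1, hx2, Pi.add_def] using this
  · have h1 : HasDerivAt (fun s : ℝ => (x:ℂ) + y * a₁ + s * b₁) b₁ z := by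
      simpa using ((Complex.ofRealCLM.hasDerivAt.mul_const b₁).const_add ((x:ℂ) + y * a₁))
    have h2 : HasDerivAt (fun s : ℝ => (x:ℂ) + y * a₂ + s * b₂) b₂ z := by
      simpa using ((Complex.ofRealCLM.hasDerivAt.mul_const b₂).const_add ((x:ℂ) + y * a₂))
    have := (((comp_deriv F₁ hF₁ _ b₁ z h1).smul_const e1).add
      ((comp_deriv F₂ hF₂ _ b₂ z h2).smul_const e2)).add
      ((comp_deriv F₃ hF₃ _ b₁ z h1).smul_const e3) |>.add
      ((comp_deriv F₄ hF₄ _ b₂ z h2).smul_const e4)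
    rw [mul_sp]
    simpa [Phi, hx1, hx2, Pi.add_def] using this
end

section
/- If Φ(ζ) = F₁(ξ₁)e₁ + F₂(ξ₂)e₂ + F₃(ξ₁)e₃ + F₄(ξ₂)e₄ with F₁, F₃ holomorphic in a domain D₁ ⊂ ℂ and F₂, F₄ holomorphic in D₂ ⊂ ℂ, then Φ is Gateaux differentiable at each ζ in the sense that lim_{ε→0+} (Φ(ζ + εh) - Φ(ζ))ε⁻¹ = h·Φ'(ζ) for all h ∈ E₃, where Φ'(ζ) = F₁'(ξ₁)e₁ + F₂'(ξ₂)e₂ + F₃'(ξ₁)e₃ + F₄'(ξ₂)e₄. -/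
open Quaternion

open Filter Topology

/-!
Along the ray `ζ + εh`, `h = h₀ + h₁i₂ + h₂i₃`, the coordinates move affinely: `ξₖ ↦ ξₖ + ε cₖ`
with `c₁ = h₀ + h₁a₁ + h₂b₁` and `c₂ = h₀ + h₁a₂ + h₂b₂`. By the chain rule the difference quotient
of each `Fⱼ(ξₖ)` therefore tends to `cₖ Fⱼ'(ξₖ)`. On the algebraic side `h = c₁e₁ + c₂e₂`, and the
multiplication table of `e₁, …, e₄` turns `h · Φ'(ζ)` into
`c₁F₁'(ξ₁)e₁ + c₂F₂'(ξ₂)e₂ + c₁F₃'(ξ₁)e₃ + c₂F₄'(ξ₂)e₄`, which is the sum of these limits.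
-/

noncomputable instance inst_s11 : NormedSpace ℂ ℍ[ℂ] :=
  NormedSpace.induced ℂ ℍ[ℂ] (Fin 4 → ℂ)
    (QuaternionAlgebra.linearEquivTuple (-1:ℂ) (0:ℂ) (-1:ℂ)).toLinearMap

-- Instance search does not unify the `SMul ℂ ℍ[ℂ]` of `Quaternion` with `Algebra.toSMul`.
instance : IsScalarTower ℂ ℍ[ℂ] ℍ[ℂ] := @IsScalarTower.right ℂ ℍ[ℂ] _ _ Quaternion.algebra

instance : SMulCommClass ℂ ℍ[ℂ] ℍ[ℂ] := @Algebra.to_smulCommClass ℂ ℍ[ℂ] _ _ Quaternion.algebra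

theorem e1_mul_e1 : e1 * e1 = e1 := by
  ext <;> simp [e1] <;> simp [Iq, Complex.ext_iff] <;> ring_nf

theorem e1_mul_e2 : e1 * e2 = 0 := by
  ext <;> simp [e1, e2] <;> simp [Iq, Complex.ext_iff]

theorem e1_mul_e3 : e1 * e3 = e3 := by
  ext <;> simp [e1, e3] <;> simp [Iq, Jq, Kq, Complex.ext_iff] <;> ring_nf

theorem e1_mul_e4 : e1 * e4 = 0 := by
  ext <;> simp [e1, e4] <;> simp [Iq, Jq, Kq, Complex.ext_iff]

theorem e2_mul_e1 : e2 * e1 = 0 := by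
  ext <;> simp [e1, e2] <;> simp [Iq, Complex.ext_iff]

theorem e2_mul_e2 : e2 * e2 = e2 := by
  ext <;> simp [e2] <;> simp [Iq, Complex.ext_iff] <;> ring_nf

theorem e2_mul_e3 : e2 * e3 = 0 := by
  ext <;> simp [e2, e3] <;> simp [Iq, Jq, Kq, Complex.ext_iff]

theorem e2_mul_e4 : e2 * e4 = e4 := by
  ext <;> simp [e2, e4] <;> simp [Iq, Jq, Kq, Complex.ext_iff] <;> ring_nf

theorem e1_add_e2 : e1 + e2 = 1 := by
  ext <;> simp [e1, e2]; ring

theorem sp_mul (c₁ c₂ d₁ d₂ d₃ d₄ : ℂ) :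
    sp c₁ c₂ * (d₁ • e1 + d₂ • e2 + d₃ • e3 + d₄ • e4) =
      (c₁ * d₁) • e1 + (c₂ * d₂) • e2 + (c₁ * d₃) • e3 + (c₂ * d₄) • e4 := by
  simp only [sp, add_mul, mul_add, smul_mul_smul_comm, e1_mul_e1, e1_mul_e2, e1_mul_e3,
    e1_mul_e4, e2_mul_e1, e2_mul_e2, e2_mul_e3, e2_mul_e4, smul_zero, add_zero, zero_add]

theorem smul_one_add_smul_sp_add_smul_sp (h₀ h₁ h₂ : ℝ) (a₁ a₂ b₁ b₂ : ℂ) :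
    (h₀ : ℂ) • (1:ℍ[ℂ]) + (h₁ : ℂ) • sp a₁ a₂ + (h₂ : ℂ) • sp b₁ b₂ =
      sp ((h₀ : ℂ) + h₁ * a₁ + h₂ * b₁) ((h₀ : ℂ) + h₁ * a₂ + h₂ * b₂) := by
  rw [← e1_add_e2]
  simp only [sp]
  module

theorem hasDerivAt_xi_line (a b : ℂ) (x y z h₀ h₁ h₂ : ℝ) :
    HasDerivAt (xi a b (fun t => x + t * h₀) (fun t => y + t * h₁) (fun t => z + t * h₂))
      ((h₀ : ℂ) + h₁ * a + h₂ * b) 0 := by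
  have hline : xi a b (fun t => x + t * h₀) (fun t => y + t * h₁) (fun t => z + t * h₂) =
      fun t : ℝ => ((x : ℂ) + y * a + z * b) + (t : ℂ) * ((h₀ : ℂ) + h₁ * a + h₂ * b) := by
    funext t
    simp only [xi]
    push_cast
    ring
  rw [hline]
  simpa using
    ((hasDerivAt_id (0 : ℝ)).ofReal_comp.mul_const _).const_add ((x : ℂ) + y * a + z * b)

theorem HasDerivAt.tendsto_slope_along {E : Type*} [NormedAddCommGroup E] [NormedSpace ℂ E]
    [NormedSpace ℝ E] [IsScalarTower ℝ ℂ E] {F : ℂ → E} {F' : E} {a b : ℂ} {x y z : ℝ}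
    (hF : HasDerivAt F F' ((x : ℂ) + y * a + z * b)) (h₀ h₁ h₂ : ℝ) :
    Tendsto (fun ε : ℝ => ε⁻¹ • (F (((x + ε * h₀ : ℝ) : ℂ) + ((y + ε * h₁ : ℝ) : ℂ) * a +
        ((z + ε * h₂ : ℝ) : ℂ) * b) - F ((x : ℂ) + y * a + z * b)))
      (𝓝[>] 0) (𝓝 (((h₀ : ℂ) + h₁ * a + h₂ * b) • F')) := by
  have hcomp := hF.scomp_of_eq 0 (hasDerivAt_xi_line a b x y z h₀ h₁ h₂) (by simp [xi])
  simpa [xi] using hcomp.tendsto_slope_zero_right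

/-- `Φ` is right-Gateaux differentiable:
`lim_{ε→0+} (Φ(ζ + εh) - Φ(ζ))ε⁻¹ = h·Φ'(ζ)` for every `h = h₀ + h₁i₂ + h₂i₃ ∈ E₃`,
where `Φ'(ζ) = F₁'(ξ₁)e₁ + F₂'(ξ₂)e₂ + F₃'(ξ₁)e₃ + F₄'(ξ₂)e₄`. -/
theorem Phi_gateaux_differentiable (a₁ a₂ b₁ b₂ : ℂ) (D₁ D₂ : Set ℂ)
    (hD₁ : IsOpen D₁) (hD₂ : IsOpen D₂) (F₁ F₂ F₃ F₄ : ℂ → ℂ)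
    (hF₁ : DifferentiableOn ℂ F₁ D₁) (hF₃ : DifferentiableOn ℂ F₃ D₁)
    (hF₂ : DifferentiableOn ℂ F₂ D₂) (hF₄ : DifferentiableOn ℂ F₄ D₂)
    (x y z : ℝ)
    (hξ₁ : (x:ℂ) + y * a₁ + z * b₁ ∈ D₁) (hξ₂ : (x:ℂ) + y * a₂ + z * b₂ ∈ D₂)
    (h₀ h₁ h₂ : ℝ) :
    Tendsto
      (fun ε : ℝ => ε⁻¹ •
        (Phi a₁ a₂ b₁ b₂ F₁ F₂ F₃ F₄ (x + ε * h₀) (y + ε * h₁) (z + ε * h₂) -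
          Phi a₁ a₂ b₁ b₂ F₁ F₂ F₃ F₄ x y z))
      (𝓝[>] (0:ℝ))
      (𝓝 (((h₀ : ℂ) • (1:ℍ[ℂ]) + (h₁ : ℂ) • sp a₁ a₂ + (h₂ : ℂ) • sp b₁ b₂) *
        (deriv F₁ ((x:ℂ) + y * a₁ + z * b₁) • e1 +
         deriv F₂ ((x:ℂ) + y * a₂ + z * b₂) • e2 +
         deriv F₃ ((x:ℂ) + y * a₁ + z * b₁) • e3 +
         deriv F₄ ((x:ℂ) + y * a₂ + z * b₂) • e4))) := by
  have hslope {F : ℂ → ℂ} {D : Set ℂ} {a b : ℂ} (hD : IsOpen D) (hF : DifferentiableOn ℂ F D)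
      (hξ : (x : ℂ) + y * a + z * b ∈ D) :=
    (hF.differentiableAt (hD.mem_nhds hξ)).hasDerivAt.tendsto_slope_along h₀ h₁ h₂
  rw [smul_one_add_smul_sp_add_smul_sp, sp_mul]
  refine Tendsto.congr (fun ε => ?_) <|
    (((hslope hD₁ hF₁ hξ₁).smul_const e1).add ((hslope hD₂ hF₂ hξ₂).smul_const e2)).add
      ((hslope hD₁ hF₃ hξ₁).smul_const e3) |>.add ((hslope hD₂ hF₄ hξ₂).smul_const e4)
  simp only [Phi, smul_sub, smul_add, sub_smul, smul_assoc]
  abel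
end
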